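/- For real parameters θ, θ' ∈ [0, π] with θ ≠ θ' and reals t₀, t₁ ≥ 0 with t₀ + t₁ = 1, define unit vectors in ℂ²: τ₀ = cos(θ/2)e₀ + sin(θ/2)e₁, τ₁ = sin(θ/2)e₀ + cos(θ/2)e₁, ν₀ = cos(θ'/2)e₀ + sin(θ'/2)e₁, ν₁ = sin(θ'/2)e₀ + cos(θ'/2)e₁, and two-qubit vectors Σ₁ = √t₀ (e₀ ⊗ τ₀) + √t₁ (e₁ ⊗ τ₁) and Σ₂ = √t₀ (e₀ ⊗ ν₀) + √t₁ (e₁ ⊗ ν₁). Then Tr₁ |Σ₁⟩⟨Σ₁| = Tr₁ |Σ₂⟩⟨Σ₂| and Tr₂ |Σ₁⟩⟨Σ₁| = Tr₂ |Σ₂⟩⟨Σ₂| hold if and only if t₀ = t₁ = 1/2 and θ' = π − θ. -/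

import Mathlib

open Matrix Kronecker Polynomial ComplexOrder

noncomputable section

/-- Partial trace over the first subsystem of a two-qubit (4×4) matrix. -/
def ptr1 (M : Matrix (Fin 2 × Fin 2) (Fin 2 × Fin 2) ℂ) : Matrix (Fin 2) (Fin 2) ℂ :=
  Matrix.of fun j l => ∑ i, M (i, j) (i, l)

/-- Partial trace over the second subsystem of a two-qubit (4×4) matrix. -/
def ptr2 (M : Matrix (Fin 2 × Fin 2) (Fin 2 × Fin 2) ℂ) : Matrix (Fin 2) (Fin 2) ℂ :=
  Matrix.of fun i k => ∑ j, M (i, j) (k, j)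

/-- Rank-one projection |v⟩⟨v| of a qubit vector. -/
def proj2 (v : Fin 2 → ℂ) : Matrix (Fin 2) (Fin 2) ℂ :=
  Matrix.of fun i j => v i * star (v j)

/-- Rank-one projection |v⟩⟨v| of a two-qubit vector. -/
def proj4 (v : Fin 2 × Fin 2 → ℂ) : Matrix (Fin 2 × Fin 2) (Fin 2 × Fin 2) ℂ :=
  Matrix.of fun p q => v p * star (v q)

/-- Kronecker (tensor) product of two qubit vectors. -/
def tens (a b : Fin 2 → ℂ) : Fin 2 × Fin 2 → ℂ := fun p => a p.1 * b p.2

/-- Unit (normalized) vector. -/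
def UnitVec {α : Type*} [Fintype α] (v : α → ℂ) : Prop := ∑ i, v i * star (v i) = 1

/-- Hermitian inner product of two-qubit vectors. -/
def inner4 (v w : Fin 2 × Fin 2 → ℂ) : ℂ := ∑ p, star (v p) * w p

/-- A 2×2 density matrix: positive semidefinite with unit trace. -/
def IsDensity2 (A : Matrix (Fin 2) (Fin 2) ℂ) : Prop := A.PosSemidef ∧ A.trace = 1

/-- Separability of a two-qubit density matrix: a finite convex combination of
Kronecker products of 2×2 density matrices. -/
def Separable4 (ρ : Matrix (Fin 2 × Fin 2) (Fin 2 × Fin 2) ℂ) : Prop :=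
  ∃ (n : ℕ) (w : Fin n → ℝ) (A B : Fin n → Matrix (Fin 2) (Fin 2) ℂ),
    (∀ i, 0 ≤ w i) ∧ (∑ i, w i = 1) ∧
    (∀ i, IsDensity2 (A i)) ∧ (∀ i, IsDensity2 (B i)) ∧
    ρ = ∑ i, (w i : ℂ) • (A i ⊗ₖ B i)

/-- Standard basis vector e₀ of ℂ². -/
def e₀ : Fin 2 → ℂ := ![1, 0]

/-- Standard basis vector e₁ of ℂ². -/
def e₁ : Fin 2 → ℂ := ![0, 1]

/-- τ₀-type vector: cos(t/2)e₀ + sin(t/2)e₁. -/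
def tau0 (t : ℝ) : Fin 2 → ℂ := ![(Real.cos (t/2) : ℂ), (Real.sin (t/2) : ℂ)]

/-- τ₁-type vector: sin(t/2)e₀ + cos(t/2)e₁. -/
def tau1 (t : ℝ) : Fin 2 → ℂ := ![(Real.sin (t/2) : ℂ), (Real.cos (t/2) : ℂ)]

/-- Σ = √t₀ (e₀ ⊗ τ₀(t)) + √t₁ (e₁ ⊗ τ₁(t)). -/
def sigVec (t₀ t₁ t : ℝ) : Fin 2 × Fin 2 → ℂ :=
  fun q => (Real.sqrt t₀ : ℂ) * tens e₀ (tau0 t) q + (Real.sqrt t₁ : ℂ) * tens e₁ (tau1 t) q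

/-!
Writing `Σ(θ) = ∑ A i j • (e i ⊗ e j)` with the real coefficient matrix
`A = [[√t₀ cos(θ/2), √t₀ sin(θ/2)], [√t₁ sin(θ/2), √t₁ cos(θ/2)]]`, the two reduced states are
`A Aᵀ = [[t₀, √(t₀ t₁) sin θ], [√(t₀ t₁) sin θ, t₁]]` and
`Aᵀ A = ½ [[1 + (t₀ - t₁) cos θ, sin θ], [sin θ, 1 - (t₀ - t₁) cos θ]]`.
So the masking conditions amount to `sin θ = sin θ'` and `(t₀ - t₁) cos θ = (t₀ - t₁) cos θ'`.
On `[0, π]` with `θ ≠ θ'`, the first forces `θ' = π - θ`, and since `cos` is injective there the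
second forces `t₀ = t₁`.
-/

open Real

lemma ptr1_proj4 (A : Matrix (Fin 2) (Fin 2) ℂ) : ptr1 (proj4 fun p => A p.1 p.2) = Aᵀ * Aᴴᵀ := by
  ext j l
  simp [ptr1, proj4, Matrix.mul_apply]

lemma ptr2_proj4 (A : Matrix (Fin 2) (Fin 2) ℂ) : ptr2 (proj4 fun p => A p.1 p.2) = A * Aᴴ := by
  ext i k
  simp [ptr2, proj4, Matrix.mul_apply]

lemma conjTranspose_map_ofReal {m n : Type*} (A : Matrix m n ℝ) :
    (A.map ((↑) : ℝ → ℂ))ᴴ = Aᵀ.map (↑) := by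
  ext i j
  simp

lemma two_mul_sin_half_mul_cos_half (x : ℝ) : 2 * sin (x / 2) * cos (x / 2) = sin x := by
  rw [← sin_two_mul, mul_div_cancel₀ x two_ne_zero]

lemma cos_half_sq_sub_sin_half_sq (x : ℝ) : cos (x / 2) ^ 2 - sin (x / 2) ^ 2 = cos x := by
  rw [← cos_two_mul', mul_div_cancel₀ x two_ne_zero]

lemma eq_pi_sub_of_sin_eq_sin {x y : ℝ} (hx : x ∈ Set.Icc 0 π) (hy : y ∈ Set.Icc 0 π)
    (hne : x ≠ y) (h : sin x = sin y) : y = π - x := by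
  have hmem : ∀ z ∈ Set.Icc 0 π, |z - π / 2| ∈ Set.Icc 0 π := fun z hz =>
    ⟨abs_nonneg _, abs_sub_le_iff.2 ⟨by linarith [hz.2, pi_pos], by linarith [hz.1, pi_pos]⟩⟩
  have habs : |x - π / 2| = |y - π / 2| := by
    refine injOn_cos (hmem x hx) (hmem y hy) ?_
    rwa [cos_abs, cos_abs, cos_sub_pi_div_two, cos_sub_pi_div_two]
  rcases abs_eq_abs.1 habs with h' | h'
  · exact absurd (by linarith) hne
  · linarith

def sigAmp (t₀ t₁ θ : ℝ) : Matrix (Fin 2) (Fin 2) ℝ :=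
  !![√t₀ * cos (θ / 2), √t₀ * sin (θ / 2); √t₁ * sin (θ / 2), √t₁ * cos (θ / 2)]

lemma sigVec_eq_sigAmp (t₀ t₁ θ : ℝ) : sigVec t₀ t₁ θ = fun p => (sigAmp t₀ t₁ θ).map (↑) p.1 p.2 := by
  ext ⟨i, j⟩
  fin_cases i <;> fin_cases j <;> simp [sigVec, sigAmp, tens, e₀, e₁, tau0, tau1]

lemma ptr1_proj4_sigVec (t₀ t₁ θ : ℝ) :
    ptr1 (proj4 (sigVec t₀ t₁ θ)) = ((sigAmp t₀ t₁ θ)ᵀ * sigAmp t₀ t₁ θ).map (↑) := by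
  rw [sigVec_eq_sigAmp, ptr1_proj4, conjTranspose_map_ofReal]
  exact (Matrix.map_mul (f := Complex.ofRealHom)).symm

lemma ptr2_proj4_sigVec (t₀ t₁ θ : ℝ) :
    ptr2 (proj4 (sigVec t₀ t₁ θ)) = (sigAmp t₀ t₁ θ * (sigAmp t₀ t₁ θ)ᵀ).map (↑) := by
  rw [sigVec_eq_sigAmp, ptr2_proj4, conjTranspose_map_ofReal]
  exact (Matrix.map_mul (f := Complex.ofRealHom)).symm

lemma sigAmp_transpose_mul_self {t₀ t₁ : ℝ} (ht₀ : 0 ≤ t₀) (ht₁ : 0 ≤ t₁) (θ : ℝ) :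
    (sigAmp t₀ t₁ θ)ᵀ * sigAmp t₀ t₁ θ =
      !![(t₀ + t₁ + (t₀ - t₁) * cos θ) / 2, (t₀ + t₁) * sin θ / 2;
        (t₀ + t₁) * sin θ / 2, (t₀ + t₁ - (t₀ - t₁) * cos θ) / 2] := by
  rw [eta_fin_two ((sigAmp t₀ t₁ θ)ᵀ * sigAmp t₀ t₁ θ), ← two_mul_sin_half_mul_cos_half,
    ← cos_half_sq_sub_sin_half_sq]
  simp only [sigAmp, Matrix.mul_apply, transpose_apply, of_apply, cons_val', cons_val_zero,
    cons_val_one, cons_val_fin_one, Fin.sum_univ_two, EmbeddingLike.apply_eq_iff_eq, vecCons_inj,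
    and_true]
  grind [mul_self_sqrt ht₀, mul_self_sqrt ht₁, sin_sq_add_cos_sq (θ / 2)]

lemma sigAmp_mul_transpose_self {t₀ t₁ : ℝ} (ht₀ : 0 ≤ t₀) (ht₁ : 0 ≤ t₁) (θ : ℝ) :
    sigAmp t₀ t₁ θ * (sigAmp t₀ t₁ θ)ᵀ = !![t₀, √t₀ * √t₁ * sin θ; √t₀ * √t₁ * sin θ, t₁] := by
  rw [eta_fin_two (sigAmp t₀ t₁ θ * (sigAmp t₀ t₁ θ)ᵀ), ← two_mul_sin_half_mul_cos_half]
  simp only [sigAmp, Matrix.mul_apply, transpose_apply, of_apply, cons_val', cons_val_zero,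
    cons_val_one, cons_val_fin_one, Fin.sum_univ_two, EmbeddingLike.apply_eq_iff_eq, vecCons_inj,
    and_true]
  grind [mul_self_sqrt ht₀, mul_self_sqrt ht₁, sin_sq_add_cos_sq (θ / 2)]

/-- for the non-orthogonal pair Σ₁ (angle θ) and Σ₂ (angle θ'), the
masking conditions hold iff t₀ = t₁ = 1/2 and θ' = π − θ. -/
theorem masking_condition_for_nonorthogonal_pair
    (θ θ' t₀ t₁ : ℝ)
    (hθ : θ ∈ Set.Icc (0 : ℝ) Real.pi) (hθ' : θ' ∈ Set.Icc (0 : ℝ) Real.pi)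
    (hne : θ ≠ θ')
    (ht₀ : 0 ≤ t₀) (ht₁ : 0 ≤ t₁) (hsum : t₀ + t₁ = 1) :
    (ptr1 (proj4 (sigVec t₀ t₁ θ)) = ptr1 (proj4 (sigVec t₀ t₁ θ')) ∧
     ptr2 (proj4 (sigVec t₀ t₁ θ)) = ptr2 (proj4 (sigVec t₀ t₁ θ'))) ↔
    (t₀ = 1/2 ∧ t₁ = 1/2 ∧ θ' = Real.pi - θ) := by
  simp only [ptr1_proj4_sigVec, ptr2_proj4_sigVec, (map_injective Complex.ofReal_injective).eq_iff,
    sigAmp_transpose_mul_self ht₀ ht₁, sigAmp_mul_transpose_self ht₀ ht₁, hsum]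
  simp only [one_mul, EmbeddingLike.apply_eq_iff_eq, vecCons_inj, ne_eq, OfNat.ofNat_ne_zero,
    not_false_eq_true, div_left_inj', add_right_inj, mul_eq_mul_left_iff, and_true, sub_right_inj,
    mul_eq_zero, true_and, and_self]
  constructor
  · rintro ⟨⟨⟨hcos | ht, hsin⟩, -⟩, -⟩
    · exact absurd (injOn_cos hθ hθ' hcos) hne
    · exact ⟨by linarith, by linarith, eq_pi_sub_of_sin_eq_sin hθ hθ' hne hsin⟩
  · rintro ⟨rfl, rfl, rfl⟩
    simp [sin_pi_sub]

end
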